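/- Let n ≥ 1, let p1, p2 : Fin n → ℕ be positive processing times, and suppose σ is a feasible sequence with p1(σ 0) = p2(σ (n−1)). Then there exists a feasible sequence τ with p1(τ 0) = min_{i} p1(i), and this τ is optimal: for every feasible sequence ρ, p1(τ 0) + Σ_i p2(i) ≤ p1(ρ 0) + Σ_i p2(i). -/
import Mathlib


/-- A sequence `σ` for a two-machine no-idle/no-wait flow shop instance is feasible
if `p2 (σ j) = p1 (σ (j+1))` for every position `j` with `j+1 < n`. -/
def FeasibleSeq (n : ℕ) (p1 p2 : Fin n → ℕ) (σ : Fin n ≃ Fin n) : Prop :=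
  ∀ j : Fin n, ∀ h : (j : ℕ) + 1 < n, p2 (σ j) = p1 (σ ⟨(j : ℕ) + 1, h⟩)

/-- if some feasible sequence `σ` has `p1 (σ 0) = p2 (σ (n-1))`, then
there is a feasible sequence `τ` starting with a job of minimum processing time on
M1 (`p1 (τ 0) = min_i p1 i`), and `τ` is optimal: its makespan
`p1 (τ 0) + Σ_i p2 i` is at most the makespan of any feasible sequence `ρ`. -/
theorem stmt_5 (n : ℕ) (hn : 1 ≤ n) (p1 p2 : Fin n → ℕ)
    (hp1 : ∀ i, 0 < p1 i) (hp2 : ∀ i, 0 < p2 i)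
    (σ : Fin n ≃ Fin n) (hσ : FeasibleSeq n p1 p2 σ)
    (hcyc : p1 (σ ⟨0, by omega⟩) = p2 (σ ⟨n - 1, by omega⟩)) :
    ∃ τ : Fin n ≃ Fin n, FeasibleSeq n p1 p2 τ ∧
      (∀ i : Fin n, p1 (τ ⟨0, by omega⟩) ≤ p1 i) ∧
      (∀ ρ : Fin n ≃ Fin n, FeasibleSeq n p1 p2 ρ →
        p1 (τ ⟨0, by omega⟩) + ∑ i, p2 i ≤ p1 (ρ ⟨0, by omega⟩) + ∑ i, p2 i) := by
  haveI : NeZero n := ⟨by omega⟩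
  -- pick k minimizing p1 ∘ σ
  obtain ⟨k, -, hk⟩ := Finset.exists_min_image (Finset.univ : Finset (Fin n))
    (fun j => p1 (σ j)) ⟨⟨0, by omega⟩, Finset.mem_univ _⟩
  refine ⟨(Equiv.addRight k).trans σ, ?_, ?_, ?_⟩
  · intro j h
    simp only [Equiv.trans_apply, Equiv.coe_addRight]
    have hjk : ((j + k : Fin n) : ℕ) = ((j : ℕ) + (k : ℕ)) % n := by
      simp [Fin.add_def]
    by_cases hlt : ((j + k : Fin n) : ℕ) + 1 < n
    · have := hσ (j + k) hlt
      convert this using 3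
      apply Fin.ext
      simp only [Fin.add_def]
      have h2 : ((j : ℕ) + (k : ℕ)) % n + 1 < n := by omega
      have h3 : ((j : ℕ) + 1 + (k : ℕ)) % n = ((j : ℕ) + (k : ℕ)) % n + 1 := by
        have : ((j : ℕ) + 1 + (k : ℕ)) % n = (((j : ℕ) + (k : ℕ)) % n + 1) % n := by
          conv_lhs => rw [show (j : ℕ) + 1 + (k : ℕ) = ((j : ℕ) + (k : ℕ)) + 1 by ring]
          rw [Nat.add_mod, Nat.mod_eq_of_lt (show 1 < n by omega)]
        rw [this, Nat.mod_eq_of_lt h2]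
      exact h3
    · -- wrap-around: j + k = n - 1
      have hv : ((j + k : Fin n) : ℕ) = n - 1 := by
        have := (j + k : Fin n).isLt; omega
      have h0 : (⟨(j : ℕ) + 1, h⟩ + k : Fin n) = ⟨0, by omega⟩ := by
        apply Fin.ext
        simp only [Fin.add_def]
        have : ((j : ℕ) + (k : ℕ)) % n = n - 1 := by rw [← hjk]; exact hv
        have h4 : ((j : ℕ) + 1 + (k : ℕ)) % n = (((j : ℕ) + (k : ℕ)) % n + 1) % n := by
          conv_lhs => rw [show (j : ℕ) + 1 + (k : ℕ) = ((j : ℕ) + (k : ℕ)) + 1 by ring]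
          rw [Nat.add_mod, Nat.mod_eq_of_lt (show 1 < n by omega)]
        rw [h4, this]
        simp [show n - 1 + 1 = n by omega]
      rw [h0]
      have : (j + k : Fin n) = ⟨n - 1, by omega⟩ := Fin.ext hv
      rw [this, ← hcyc]
  · intro i
    simp only [Equiv.trans_apply, Equiv.coe_addRight]
    have h0 : ((⟨0, by omega⟩ : Fin n) + k) = k := by
      apply Fin.ext; simp [Fin.add_def, Nat.mod_eq_of_lt k.isLt]
    rw [h0]
    have := hk (σ.symm i) (Finset.mem_univ _)
    simpa using this
  · intro ρ hρ
    have h0 : ((⟨0, by omega⟩ : Fin n) + k) = k := by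
      apply Fin.ext; simp [Fin.add_def, Nat.mod_eq_of_lt k.isLt]
    simp only [Equiv.trans_apply, Equiv.coe_addRight, h0]
    have := hk (σ.symm (ρ ⟨0, by omega⟩)) (Finset.mem_univ _)
    simp only [Equiv.apply_symm_apply] at this
    omega
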